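/- arXiv:2506.06679 — 8 statements merged into one kernel-verified Lean document; each statement's English description precedes it below -/
import Mathlib

section
/- Let λ > 1 be a real number and suppose f : ℝⁿ × ℝᵐ → ℝⁿ is continuous and U ⊆ ℝᵐ is compact and nonempty. Let v : X̂ → ℝ be bounded and continuous and satisfy: (i) max_{u∈U} v(f(x,u)) ≥ λ·v(x) for every x ∈ X\T, and (ii) v(x) ≤ 0 for every x ∈ X̂\X. Then the set {x ∈ X : v(x) > 0} is a controlled reach-avoid set; that is, for every x₀ ∈ X with v(x₀) > 0 there exist a control policy π and a time k ∈ ℕ such that φ^π_{x₀}(k) ∈ T and φ^π_{x₀}(t) ∈ X for all 0 ≤ t ≤ k. -/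
open MeasureTheory Set

noncomputable section

/-- Trajectory of the discrete-time control system `x(t+1) = f(x(t), u(t))`. -/
def traj {n m : ℕ} (f : (Fin n → ℝ) → (Fin m → ℝ) → (Fin n → ℝ))
    (x0 : Fin n → ℝ) (π : ℕ → (Fin m → ℝ)) : ℕ → (Fin n → ℝ)
  | 0 => x0
  | t + 1 => f (traj f x0 π t) (π t)

/-- Proposition 1: the maximization-based Lyapunov-like condition yields a
controlled reach-avoid set. -/
theorem stmt_0 {n m : ℕ} (lam : ℝ) (hlam : 1 < lam)
    (f : (Fin n → ℝ) → (Fin m → ℝ) → (Fin n → ℝ))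
    (hf : Continuous fun p : (Fin n → ℝ) × (Fin m → ℝ) => f p.1 p.2)
    (U : Set (Fin m → ℝ)) (hUc : IsCompact U) (hUne : U.Nonempty)
    (X T Xhat : Set (Fin n → ℝ))
    (hXo : IsOpen X) (hXb : Bornology.IsBounded X)
    (hTo : IsOpen T) (hTb : Bornology.IsBounded T) (hTX : T ⊆ X)
    (hXhat1 : ∀ x ∈ X, ∀ u ∈ U, f x u ∈ Xhat) (hXhat2 : X ⊆ Xhat)
    (v : (Fin n → ℝ) → ℝ)
    (hvb : ∃ M : ℝ, ∀ x ∈ Xhat, |v x| ≤ M)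
    (hvc : ContinuousOn v Xhat)
    (h1 : ∀ x ∈ X \ T, lam * v x ≤ sSup ((fun u => v (f x u)) '' U))
    (h2 : ∀ x ∈ Xhat \ X, v x ≤ 0) :
    ∀ x0 ∈ X, 0 < v x0 →
      ∃ π : ℕ → (Fin m → ℝ), (∀ t, π t ∈ U) ∧
        ∃ k : ℕ, traj f x0 π k ∈ T ∧ ∀ t ≤ k, traj f x0 π t ∈ X := by
  intro x0 hx0 hv0
  classical
  obtain ⟨M, hM⟩ := hvb
  -- existence of a good control at each relevant point
  have key : ∀ x, x ∈ X \ T → 0 < v x → ∃ u ∈ U, lam * v x ≤ v (f x u) := by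
    intro x hx hvx
    have hcont : ContinuousOn (fun u => v (f x u)) U := by
      apply hvc.comp ((hf.comp (Continuous.prodMk_right x)).continuousOn)
      intro u hu
      exact hXhat1 x hx.1 u hu
    obtain ⟨u, huU, hmax⟩ := hUc.exists_isMaxOn hUne hcont
    refine ⟨u, huU, le_trans (h1 x hx) ?_⟩
    apply csSup_le (hUne.image _)
    rintro y ⟨a, ha, rfl⟩
    exact hmax ha
  -- choice function
  let step : (Fin n → ℝ) → (Fin m → ℝ) := fun x =>
    if h : x ∈ X \ T ∧ 0 < v x then (key x h.1 h.2).choose else hUne.choose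
  have stepU : ∀ x, step x ∈ U := by
    intro x
    by_cases h : x ∈ X \ T ∧ 0 < v x
    · simp only [step, dif_pos h]; exact (key x h.1 h.2).choose_spec.1
    · simp only [step, dif_neg h]; exact hUne.choose_spec
  have stepSpec : ∀ x, x ∈ X \ T → 0 < v x → lam * v x ≤ v (f x (step x)) := by
    intro x hx hvx
    have h : x ∈ X \ T ∧ 0 < v x := ⟨hx, hvx⟩
    simp only [step, dif_pos h]
    exact (key x h.1 h.2).choose_spec.2
  -- state sequence
  let xs : ℕ → (Fin n → ℝ) := fun t => Nat.rec x0 (fun _ x => f x (step x)) t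
  have xs0 : xs 0 = x0 := rfl
  have xsS : ∀ t, xs (t + 1) = f (xs t) (step (xs t)) := fun t => rfl
  let π : ℕ → (Fin m → ℝ) := fun t => step (xs t)
  have htraj : ∀ t, traj f x0 π t = xs t := by
    intro t
    induction t with
    | zero => rfl
    | succ t ih => simp [traj, ih, xsS, π]
  have hlam0 : (0:ℝ) < lam := lt_trans one_pos hlam
  -- invariant
  have inv : ∀ t, (∀ s ≤ t, xs s ∉ T) → xs t ∈ X ∧ lam ^ t * v x0 ≤ v (xs t) := by
    intro t
    induction t with
    | zero => intro _; simpa [xs0] using hx0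
    | succ t ih =>
      intro hnT
      obtain ⟨hXt, hvt⟩ := ih (fun s hs => hnT s (le_trans hs (Nat.le_succ t)))
      have hvpos : 0 < v (xs t) :=
        lt_of_lt_of_le (by positivity) hvt
      have hxt : xs t ∈ X \ T := ⟨hXt, hnT t (Nat.le_succ t)⟩
      have hstep := stepSpec (xs t) hxt hvpos
      have hnext : lam ^ (t + 1) * v x0 ≤ v (xs (t + 1)) := by
        rw [xsS]
        calc lam ^ (t + 1) * v x0 = lam * (lam ^ t * v x0) := by ring
          _ ≤ lam * v (xs t) := by nlinarith
          _ ≤ _ := hstep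
      have hXhatnext : xs (t + 1) ∈ Xhat := by
        rw [xsS]; exact hXhat1 _ hXt _ (stepU _)
      have hXnext : xs (t + 1) ∈ X := by
        by_contra hnot
        have := h2 _ ⟨hXhatnext, hnot⟩
        nlinarith [pow_pos hlam0 (t + 1)]
      exact ⟨hXnext, hnext⟩
  -- there must exist a hitting time
  have hit : ∃ k, xs k ∈ T := by
    by_contra hno
    push_neg at hno
    obtain ⟨k, hk⟩ := pow_unbounded_of_one_lt (M / v x0) hlam
    have ⟨hXk, hvk⟩ := inv k (fun s _ => hno s)
    have hMb := hM _ (hXhat2 hXk)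
    have : M < lam ^ k * v x0 := by
      rw [div_lt_iff₀ hv0] at hk; linarith
    have : v (xs k) ≤ M := le_trans (le_abs_self _) hMb
    linarith
  -- minimal hitting time
  let k := Nat.find hit
  have hkT : xs k ∈ T := Nat.find_spec hit
  have hkmin : ∀ s < k, xs s ∉ T := fun s hs => Nat.find_min hit hs
  refine ⟨π, fun t => stepU _, k, ?_, ?_⟩
  · rw [htraj]; exact hkT
  · intro t ht
    rw [htraj]
    rcases lt_or_eq_of_le ht with h | h
    · exact (inv t (fun s hs => hkmin s (lt_of_le_of_lt hs h))).1
    · rw [h]; exact hTX hkT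
end
end

section
/- Let λ > 1 be a real number, let f : ℝⁿ × ℝᵐ → ℝⁿ, and let U ⊆ ℝᵐ be compact and nonempty. Suppose there exist a bounded function v : X̂ → ℝ and a feedback control function u : ℝⁿ → ℝᵐ with u(x) ∈ U for all x, such that: (i) v(f(x, u(x))) ≥ λ·v(x) for every x ∈ X\T, and (ii) v(x) ≤ 0 for every x ∈ X̂\X. Then the set {x ∈ X : v(x) > 0} is a controlled reach-avoid set; that is, for every x₀ ∈ X with v(x₀) > 0 there exist a control policy π and a time k ∈ ℕ such that φ^π_{x₀}(k) ∈ T and φ^π_{x₀}(t) ∈ X for all 0 ≤ t ≤ k. -/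
open MeasureTheory Set

noncomputable section

/-!
Under the feedback law `u` the trajectory is the orbit of the closed-loop map `x ↦ f x (u x)`.
While this orbit stays outside `T`, condition (i) makes `v` grow geometrically along it, so `v`
stays positive and condition (ii) keeps the orbit inside `X`. Since `v` is bounded, geometric
growth cannot go on forever, so the orbit reaches `T`, and it does so before leaving `X`.
-/

theorem traj_feedback {n m : ℕ} (f : (Fin n → ℝ) → (Fin m → ℝ) → (Fin n → ℝ))
    (u : (Fin n → ℝ) → (Fin m → ℝ)) (x0 : Fin n → ℝ) (t : ℕ) :
    traj f x0 (fun s => u ((fun x => f x (u x))^[s] x0)) t = (fun x => f x (u x))^[t] x0 := by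
  induction t with
  | zero => rfl
  | succ t ih => rw [traj, ih, Function.iterate_succ_apply']

section Orbit

variable {α : Type*} {F : α → α} {X T Y : Set α} {v : α → ℝ} {lam : ℝ} {x0 : α}

theorem iterate_mem_and_pow_mul_le (hlam : 0 < lam) (hFY : ∀ x ∈ X \ T, F x ∈ Y)
    (hgrow : ∀ x ∈ X \ T, lam * v x ≤ v (F x)) (hout : ∀ x ∈ Y \ X, v x ≤ 0)
    (hx0 : x0 ∈ X) (hv0 : 0 < v x0) :
    ∀ t, (∀ s < t, F^[s] x0 ∉ T) → F^[t] x0 ∈ X ∧ lam ^ t * v x0 ≤ v (F^[t] x0) := by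
  intro t
  induction t with
  | zero => exact fun _ => ⟨hx0, by simp⟩
  | succ t ih =>
    intro hnotT
    obtain ⟨hX, hv⟩ := ih fun s hs => hnotT s (hs.trans t.lt_succ_self)
    have hXT : F^[t] x0 ∈ X \ T := ⟨hX, hnotT t t.lt_succ_self⟩
    rw [Function.iterate_succ_apply']
    have hv' : lam ^ (t + 1) * v x0 ≤ v (F (F^[t] x0)) :=
      calc lam ^ (t + 1) * v x0 = lam * (lam ^ t * v x0) := by ring
        _ ≤ lam * v (F^[t] x0) := mul_le_mul_of_nonneg_left hv hlam.le
        _ ≤ v (F (F^[t] x0)) := hgrow _ hXT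
    have hpos : 0 < v (F (F^[t] x0)) := (by positivity : 0 < lam ^ (t + 1) * v x0).trans_le hv'
    refine ⟨?_, hv'⟩
    by_contra hnotX
    exact (hout _ ⟨hFY _ hXT, hnotX⟩).not_gt hpos

theorem exists_iterate_mem_of_growth (hlam : 1 < lam) (hbdd : BddAbove (v '' X))
    (hFY : ∀ x ∈ X \ T, F x ∈ Y) (hgrow : ∀ x ∈ X \ T, lam * v x ≤ v (F x))
    (hout : ∀ x ∈ Y \ X, v x ≤ 0) (hx0 : x0 ∈ X) (hv0 : 0 < v x0) :
    ∃ k, F^[k] x0 ∈ T ∧ ∀ t ≤ k, F^[t] x0 ∈ X := by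
  classical
  have hinv := iterate_mem_and_pow_mul_le (zero_lt_one.trans hlam) hFY hgrow hout hx0 hv0
  have hhit : ∃ t, F^[t] x0 ∈ T := by
    by_contra! hnever
    obtain ⟨M, hM⟩ := hbdd
    obtain ⟨t, ht⟩ := pow_unbounded_of_one_lt (M / v x0) hlam
    obtain ⟨hX, hv⟩ := hinv t fun s _ => hnever s
    have hM' : v (F^[t] x0) ≤ M := hM ⟨_, hX, rfl⟩
    rw [div_lt_iff₀ hv0] at ht
    linarith
  exact ⟨Nat.find hhit, Nat.find_spec hhit, fun t ht =>
    (hinv t fun s hs => Nat.find_min hhit (hs.trans_le ht)).1⟩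

end Orbit

theorem stmt_1_general {n m : ℕ} (lam : ℝ) (hlam : 1 < lam)
    (f : (Fin n → ℝ) → (Fin m → ℝ) → (Fin n → ℝ))
    (U : Set (Fin m → ℝ))
    (X T Xhat : Set (Fin n → ℝ))
    (hXhat1 : ∀ x ∈ X, ∀ u ∈ U, f x u ∈ Xhat) (hXhat2 : X ⊆ Xhat)
    (v : (Fin n → ℝ) → ℝ)
    (hvb : ∃ M : ℝ, ∀ x ∈ Xhat, |v x| ≤ M)
    (u : (Fin n → ℝ) → (Fin m → ℝ)) (hu : ∀ x, u x ∈ U)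
    (h1 : ∀ x ∈ X \ T, lam * v x ≤ v (f x (u x)))
    (h2 : ∀ x ∈ Xhat \ X, v x ≤ 0) :
    ∀ x0 ∈ X, 0 < v x0 →
      ∃ π : ℕ → (Fin m → ℝ), (∀ t, π t ∈ U) ∧
        ∃ k : ℕ, traj f x0 π k ∈ T ∧ ∀ t ≤ k, traj f x0 π t ∈ X := by
  intro x0 hx0 hv0
  obtain ⟨M, hM⟩ := hvb
  have hbdd : BddAbove (v '' X) :=
    ⟨M, by rintro _ ⟨x, hx, rfl⟩; exact (le_abs_self _).trans (hM x (hXhat2 hx))⟩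
  obtain ⟨k, hkT, hkX⟩ := exists_iterate_mem_of_growth hlam hbdd
    (fun x hx => hXhat1 x hx.1 (u x) (hu x)) h1 h2 hx0 hv0
  refine ⟨fun s => u ((fun x => f x (u x))^[s] x0), fun t => hu _, k, ?_, fun t ht => ?_⟩ <;>
    rw [traj_feedback]
  exacts [hkT, hkX t ht]

/-- Corollary 1: a feedback-control Lyapunov-like condition yields a
controlled reach-avoid set. -/
theorem stmt_1 {n m : ℕ} (lam : ℝ) (hlam : 1 < lam)
    (f : (Fin n → ℝ) → (Fin m → ℝ) → (Fin n → ℝ))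
    (U : Set (Fin m → ℝ)) (hUc : IsCompact U) (hUne : U.Nonempty)
    (X T Xhat : Set (Fin n → ℝ))
    (hXo : IsOpen X) (hXb : Bornology.IsBounded X)
    (hTo : IsOpen T) (hTb : Bornology.IsBounded T) (hTX : T ⊆ X)
    (hXhat1 : ∀ x ∈ X, ∀ u ∈ U, f x u ∈ Xhat) (hXhat2 : X ⊆ Xhat)
    (v : (Fin n → ℝ) → ℝ)
    (hvb : ∃ M : ℝ, ∀ x ∈ Xhat, |v x| ≤ M)
    (u : (Fin n → ℝ) → (Fin m → ℝ)) (hu : ∀ x, u x ∈ U)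
    (h1 : ∀ x ∈ X \ T, lam * v x ≤ v (f x (u x)))
    (h2 : ∀ x ∈ Xhat \ X, v x ≤ 0) :
    ∀ x0 ∈ X, 0 < v x0 →
      ∃ π : ℕ → (Fin m → ℝ), (∀ t, π t ∈ U) ∧
        ∃ k : ℕ, traj f x0 π k ∈ T ∧ ∀ t ≤ k, traj f x0 π t ∈ X :=
  stmt_1_general lam hlam f U X T Xhat hXhat1 hXhat2 v hvb u hu h1 h2
end
end

section
/- Suppose U = {u ∈ ℝᵐ : u̲ ≤ u ≤ ū} is a nondegenerate compact box (u̲(j) < ū(j) for every coordinate j), X ⊆ ℝⁿ and T ⊆ X are open and bounded, and f : ℝⁿ × ℝᵐ → ℝⁿ satisfies ‖f(x,u) − f(x',u)‖ ≤ L_x‖x − x'‖ and ‖f(x,u) − f(x,u')‖ ≤ L_u‖u − u'‖ for all x, x' ∈ ℝⁿ and u, u' ∈ U, with L_x, L_u > 0. Let P be a Borel probability measure on ℝᵐ with P(U) = 1 satisfying Assumption 1. Then for every initial state x₀ ∈ ℝⁿ the following are equivalent: (a) there exist a control policy π and k ∈ ℕ such that φ^π_{x₀}(k) ∈ T and φ^π_{x₀}(t)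 ∈ X for all 0 ≤ t ≤ k; (b) P^∞({π : ∃ k ∈ ℕ, φ^π_{x₀}(k) ∈ T and φ^π_{x₀}(l) ∈ X for all 0 ≤ l ≤ k}) > 0. In other words, a controlled reach-avoid set is exactly a 0-reach-avoid set. -/
open MeasureTheory Set

noncomputable section

/-!
A reach-avoiding admissible policy `π` is robust: by the Lipschitz bounds, every input sequence
that stays in `U` and within `δ` of `π` up to the reaching time `k` has a trajectory within
`(Lx + Lu + 1) ^ k * δ` of that of `π`, so it still reach-avoids when `δ` is small. These
perturbations form a cylinder whose factors `U ∩ closedBall (π i) δ` have nonempty interior since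
the box is nondegenerate, so it has positive `P^∞`-probability by Assumption 1. Conversely,
`P^∞`-almost every input sequence takes values in `U`, so an event of positive probability
contains an admissible policy.
-/

open Metric Filter Topology

theorem Icc_subset_closure_interior_Icc {ι : Type*} [Finite ι] {lo hi : ι → ℝ}
    (h : ∀ j, lo j < hi j) : Icc lo hi ⊆ closure (interior (Icc lo hi)) := by
  rw [← pi_univ_Icc, interior_pi_set finite_univ, closure_pi_set]
  exact pi_mono fun j _ => (closure_interior_Icc (h j).ne).ge

theorem interior_inter_closedBall_nonempty {α : Type*} [PseudoMetricSpace α] {s : Set α}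
    (hs : s ⊆ closure (interior s)) {u : α} (hu : u ∈ s) {δ : ℝ} (hδ : 0 < δ) :
    (interior (s ∩ closedBall u δ)).Nonempty := by
  obtain ⟨v, hv, hvs⟩ := mem_closure_iff_nhds.1 (hs hu) _ (ball_mem_nhds u hδ)
  rw [interior_inter]
  exact ⟨v, hvs, ball_subset_interior_closedBall hv⟩

theorem ae_forall_mem_of_measure_cylinder {β : Type*} [MeasurableSpace β] {P : Measure β}
    {Pinf : Measure (ℕ → β)} [IsProbabilityMeasure Pinf] {U : Set β} (hUm : MeasurableSet U)
    (hPU : P U = 1)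
    (hPinf : ∀ (k : ℕ) (s : ℕ → Set β), (∀ i, MeasurableSet (s i)) →
      Pinf {ω | ∀ i < k, ω i ∈ s i} = ∏ i ∈ Finset.range k, P (s i)) :
    ∀ᵐ ω ∂Pinf, ∀ t, ω t ∈ U := by
  refine ae_all_iff.2 fun t => ?_
  have hcyl : ∀ᵐ ω ∂Pinf, ∀ i < t + 1, ω i ∈ U := by
    rw [ae_iff_measure_eq, hPinf _ _ fun _ => hUm]
    · simp [hPU]
    · exact (measurableSet_setOfPred.2 (Measurable.forall fun i => Measurable.imp measurable_const
        (measurableSet_setOfPred.1 (measurable_pi_apply i hUm)))).nullMeasurableSet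
  exact hcyl.mono fun ω hω => hω t t.lt_succ_self

section ReachAvoid

variable {n m : ℕ} {f : (Fin n → ℝ) → (Fin m → ℝ) → (Fin n → ℝ)} {U : Set (Fin m → ℝ)}
  {Lx Lu : ℝ} {X T : Set (Fin n → ℝ)} {x0 : Fin n → ℝ}

variable (f X T x0) in
def ReachAvoids (π : ℕ → Fin m → ℝ) : Prop :=
  ∃ k, traj f x0 π k ∈ T ∧ ∀ l ≤ k, traj f x0 π l ∈ X

theorem norm_traj_sub_traj_le (hLx0 : 0 ≤ Lx) (hLu0 : 0 ≤ Lu)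
    (hLx : ∀ x x', ∀ u ∈ U, ‖f x u - f x' u‖ ≤ Lx * ‖x - x'‖)
    (hLu : ∀ x, ∀ u ∈ U, ∀ u' ∈ U, ‖f x u - f x u'‖ ≤ Lu * ‖u - u'‖)
    {π ω : ℕ → Fin m → ℝ} {δ : ℝ} (hδ : 0 ≤ δ) :
    ∀ {t : ℕ}, (∀ s < t, π s ∈ U ∧ ω s ∈ U ∧ ‖ω s - π s‖ ≤ δ) →
      ‖traj f x0 ω t - traj f x0 π t‖ ≤ (Lx + Lu + 1) ^ t * δ
  | 0, _ => by simpa [traj] using hδ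
  | t + 1, hclose => by
    obtain ⟨hπU, hωU, hωπ⟩ := hclose t t.lt_succ_self
    have ih := norm_traj_sub_traj_le hLx0 hLu0 hLx hLu hδ fun s hs =>
      hclose s (hs.trans t.lt_succ_self)
    have hpow : 1 ≤ (Lx + Lu + 1) ^ t := one_le_pow₀ (by linarith)
    calc ‖traj f x0 ω (t + 1) - traj f x0 π (t + 1)‖
        ≤ ‖f (traj f x0 ω t) (ω t) - f (traj f x0 π t) (ω t)‖ +
          ‖f (traj f x0 π t) (ω t) - f (traj f x0 π t) (π t)‖ :=
          norm_sub_le_norm_sub_add_norm_sub _ _ _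
      _ ≤ Lx * ‖traj f x0 ω t - traj f x0 π t‖ + Lu * ‖ω t - π t‖ :=
          add_le_add (hLx _ _ _ hωU) (hLu _ _ hωU _ hπU)
      _ ≤ Lx * ((Lx + Lu + 1) ^ t * δ) + Lu * ((Lx + Lu + 1) ^ t * δ) := by
          gcongr
          exact hωπ.trans (le_mul_of_one_le_left hδ hpow)
      _ ≤ (Lx + Lu + 1) * ((Lx + Lu + 1) ^ t * δ) := by
          rw [← add_mul]
          exact mul_le_mul_of_nonneg_right (by linarith) (by positivity)
      _ = (Lx + Lu + 1) ^ (t + 1) * δ := by ring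

theorem exists_pos_reachAvoids_of_norm_sub_le (hLx0 : 0 ≤ Lx) (hLu0 : 0 ≤ Lu)
    (hLx : ∀ x x', ∀ u ∈ U, ‖f x u - f x' u‖ ≤ Lx * ‖x - x'‖)
    (hLu : ∀ x, ∀ u ∈ U, ∀ u' ∈ U, ‖f x u - f x u'‖ ≤ Lu * ‖u - u'‖)
    (hXo : IsOpen X) (hTo : IsOpen T) {π : ℕ → Fin m → ℝ} (hπU : ∀ t, π t ∈ U) {k : ℕ}
    (hT : traj f x0 π k ∈ T) (hX : ∀ l ≤ k, traj f x0 π l ∈ X) :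
    ∃ δ > 0, ∀ ω : ℕ → Fin m → ℝ, (∀ t < k, ω t ∈ U ∧ ‖ω t - π t‖ ≤ δ) →
      ReachAvoids f X T x0 ω := by
  have hballs : ∀ᶠ ε in 𝓝[>] (0 : ℝ), ball (traj f x0 π k) ε ⊆ T ∧
      ∀ l ∈ Iic k, ball (traj f x0 π l) ε ⊆ X := by
    refine eventually_nhdsWithin_of_eventually_nhds ((eventually_ball_subset ?_).and ?_)
    · exact hTo.mem_nhds hT
    · exact (eventually_all_finite (finite_Iic k)).2 fun l hl =>
        eventually_ball_subset (hXo.mem_nhds (hX l hl))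
  obtain ⟨ε, ⟨hεT, hεX⟩, hε⟩ := (hballs.and self_mem_nhdsWithin).exists
  set K := Lx + Lu + 1
  have hK : 1 ≤ K := by linarith
  refine ⟨ε / (2 * K ^ k), by positivity, fun ω hω => ?_⟩
  have hclose : ∀ l ≤ k, dist (traj f x0 ω l) (traj f x0 π l) < ε := fun l hl => by
    rw [dist_eq_norm]
    calc _ ≤ K ^ l * (ε / (2 * K ^ k)) := norm_traj_sub_traj_le hLx0 hLu0 hLx hLu (by positivity)
            fun s hs => ⟨hπU s, hω s (hs.trans_le hl)⟩
      _ ≤ K ^ k * (ε / (2 * K ^ k)) := by gcongr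
      _ < ε := by field_simp; linarith
  exact ⟨k, hεT (hclose k le_rfl), fun l hl => hεX l hl (hclose l hl)⟩

end ReachAvoid

theorem stmt_2_general {n m : ℕ} (lo hi : Fin m → ℝ) (hbox : ∀ j, lo j < hi j)
    (f : (Fin n → ℝ) → (Fin m → ℝ) → (Fin n → ℝ))
    (Lx Lu : ℝ) (hLx0 : 0 < Lx) (hLu0 : 0 < Lu)
    (hLx : ∀ x x' : Fin n → ℝ, ∀ u ∈ Set.Icc lo hi,
      ‖f x u - f x' u‖ ≤ Lx * ‖x - x'‖)
    (hLu : ∀ x : Fin n → ℝ, ∀ u ∈ Set.Icc lo hi, ∀ u' ∈ Set.Icc lo hi,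
      ‖f x u - f x u'‖ ≤ Lu * ‖u - u'‖)
    (X T : Set (Fin n → ℝ))
    (hXo : IsOpen X)
    (hTo : IsOpen T)
    (P : Measure (Fin m → ℝ))
    (hPU : P (Set.Icc lo hi) = 1)
    -- Assumption 1: every Borel subset of `U` with nonempty interior has
    -- positive probability.
    (hP1 : ∀ B ⊆ Set.Icc lo hi, MeasurableSet B → (interior B).Nonempty → 0 < P B)
    -- `Pinf` is the i.i.d. product measure `P^∞` on the sequence space,
    -- characterized on cylinder sets.
    (Pinf : Measure (ℕ → (Fin m → ℝ))) [IsProbabilityMeasure Pinf]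
    (hPinf : ∀ (k : ℕ) (s : ℕ → Set (Fin m → ℝ)), (∀ i, MeasurableSet (s i)) →
      Pinf {ω | ∀ i < k, ω i ∈ s i} = ∏ i ∈ Finset.range k, P (s i)) :
    ∀ x0 : Fin n → ℝ,
      (∃ π : ℕ → (Fin m → ℝ), (∀ t, π t ∈ Set.Icc lo hi) ∧
          ∃ k : ℕ, traj f x0 π k ∈ T ∧ ∀ t ≤ k, traj f x0 π t ∈ X) ↔
        0 < Pinf {π : ℕ → (Fin m → ℝ) |
          ∃ k : ℕ, traj f x0 π k ∈ T ∧ ∀ l ≤ k, traj f x0 π l ∈ X} := by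
  intro x0
  constructor
  · rintro ⟨π, hπU, k, hT, hX⟩
    obtain ⟨δ, hδ, hrobust⟩ :=
      exists_pos_reachAvoids_of_norm_sub_le hLx0.le hLu0.le hLx hLu hXo hTo hπU hT hX
    set B : ℕ → Set (Fin m → ℝ) := fun i => Icc lo hi ∩ closedBall (π i) δ
    have hBm : ∀ i, MeasurableSet (B i) := fun i =>
      measurableSet_Icc.inter measurableSet_closedBall
    have hBpos : ∀ i, 0 < P (B i) := fun i => hP1 _ inter_subset_left (hBm i)
      (interior_inter_closedBall_nonempty (Icc_subset_closure_interior_Icc hbox) (hπU i) hδ)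
    calc 0 < ∏ i ∈ Finset.range k, P (B i) := CanonicallyOrderedAdd.prod_pos.2 fun i _ => hBpos i
      _ = Pinf {ω | ∀ i < k, ω i ∈ B i} := (hPinf k B hBm).symm
      _ ≤ Pinf {ω | ReachAvoids f X T x0 ω} := measure_mono fun ω hω =>
        hrobust ω fun t ht => ⟨(hω t ht).1, mem_closedBall_iff_norm.1 (hω t ht).2⟩
  · intro hpos
    obtain ⟨π, hπS, hπU⟩ := Measure.exists_mem_of_measure_ne_zero_of_ae hpos.ne'
      (ae_restrict_of_ae (ae_forall_mem_of_measure_cylinder measurableSet_Icc hPU hPinf))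
    exact ⟨π, hπU, hπS⟩

/-- Theorem 1: under Assumption 1, a controlled reach-avoid set is exactly a
`0`-reach-avoid set, i.e. for every initial state, reach-avoidance by some
control policy is equivalent to positive probability of reach-avoidance
under i.i.d. random inputs. -/
theorem stmt_2 {n m : ℕ} (lo hi : Fin m → ℝ) (hbox : ∀ j, lo j < hi j)
    (f : (Fin n → ℝ) → (Fin m → ℝ) → (Fin n → ℝ))
    (Lx Lu : ℝ) (hLx0 : 0 < Lx) (hLu0 : 0 < Lu)
    (hLx : ∀ x x' : Fin n → ℝ, ∀ u ∈ Set.Icc lo hi,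
      ‖f x u - f x' u‖ ≤ Lx * ‖x - x'‖)
    (hLu : ∀ x : Fin n → ℝ, ∀ u ∈ Set.Icc lo hi, ∀ u' ∈ Set.Icc lo hi,
      ‖f x u - f x u'‖ ≤ Lu * ‖u - u'‖)
    (X T : Set (Fin n → ℝ))
    (hXo : IsOpen X) (hXb : Bornology.IsBounded X)
    (hTo : IsOpen T) (hTb : Bornology.IsBounded T) (hTX : T ⊆ X)
    (P : Measure (Fin m → ℝ)) [IsProbabilityMeasure P]
    (hPU : P (Set.Icc lo hi) = 1)
    -- Assumption 1: every Borel subset of `U` with nonempty interior has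
    -- positive probability.
    (hP1 : ∀ B ⊆ Set.Icc lo hi, MeasurableSet B → (interior B).Nonempty → 0 < P B)
    -- `Pinf` is the i.i.d. product measure `P^∞` on the sequence space,
    -- characterized on cylinder sets.
    (Pinf : Measure (ℕ → (Fin m → ℝ))) [IsProbabilityMeasure Pinf]
    (hPinf : ∀ (k : ℕ) (s : ℕ → Set (Fin m → ℝ)), (∀ i, MeasurableSet (s i)) →
      Pinf {ω | ∀ i < k, ω i ∈ s i} = ∏ i ∈ Finset.range k, P (s i)) :
    ∀ x0 : Fin n → ℝ,
      (∃ π : ℕ → (Fin m → ℝ), (∀ t, π t ∈ Set.Icc lo hi) ∧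
          ∃ k : ℕ, traj f x0 π k ∈ T ∧ ∀ t ≤ k, traj f x0 π t ∈ X) ↔
        0 < Pinf {π : ℕ → (Fin m → ℝ) |
          ∃ k : ℕ, traj f x0 π k ∈ T ∧ ∀ l ≤ k, traj f x0 π l ∈ X} :=
  stmt_2_general lo hi hbox f Lx Lu hLx0 hLu0 hLx hLu X T hXo hTo P hPU hP1 Pinf hPinf
end
end

section
/- Suppose f : ℝⁿ × ℝᵐ → ℝⁿ satisfies ‖f(x,u) − f(x',u)‖ ≤ L_x‖x − x'‖ for all x, x' ∈ ℝⁿ and u ∈ U, and ‖f(x,u) − f(x,u')‖ ≤ L_u‖u − u'‖ for all x ∈ ℝⁿ and u, u' ∈ U, where L_x, L_u ≥ 0. Let π = (u(t))_{t∈ℕ} and π' = (u'(t))_{t∈ℕ} be two control policies with values in U, and let x₀ ∈ ℝⁿ. Then for every t ≥ 1, ‖φ^{π'}_{x₀}(t) − φ^{π}_{x₀}(t)‖ ≤ Σ_{l=1}^{t} L_x^{l−1} · L_u · ‖u'(t−l) − u(t−l)‖. -/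
open MeasureTheory Set

noncomputable section

/-- Lipschitz estimate on the deviation of two trajectories driven by two
different control policies from the same initial state. -/
theorem stmt_3 {n m : ℕ}
    (f : (Fin n → ℝ) → (Fin m → ℝ) → (Fin n → ℝ))
    (U : Set (Fin m → ℝ)) (hUc : IsCompact U)
    (Lx Lu : ℝ) (hLx0 : 0 ≤ Lx) (hLu0 : 0 ≤ Lu)
    (hLx : ∀ x x' : Fin n → ℝ, ∀ u ∈ U, ‖f x u - f x' u‖ ≤ Lx * ‖x - x'‖)
    (hLu : ∀ x : Fin n → ℝ, ∀ u ∈ U, ∀ u' ∈ U, ‖f x u - f x u'‖ ≤ Lu * ‖u - u'‖)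
    (π π' : ℕ → (Fin m → ℝ)) (hπ : ∀ t, π t ∈ U) (hπ' : ∀ t, π' t ∈ U)
    (x0 : Fin n → ℝ) :
    ∀ t : ℕ, 1 ≤ t →
      ‖traj f x0 π' t - traj f x0 π t‖ ≤
        ∑ l ∈ Finset.Icc 1 t, Lx ^ (l - 1) * Lu * ‖π' (t - l) - π (t - l)‖ := by
  have key : ∀ t : ℕ, ‖traj f x0 π' t - traj f x0 π t‖ ≤
      ∑ k ∈ Finset.range t, Lx ^ k * Lu * ‖π' (t - 1 - k) - π (t - 1 - k)‖ := by
    intro t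
    induction t with
    | zero => simp [traj]
    | succ t ih =>
      have htri : ‖traj f x0 π' (t + 1) - traj f x0 π (t + 1)‖ ≤
          ‖f (traj f x0 π' t) (π' t) - f (traj f x0 π t) (π' t)‖ +
          ‖f (traj f x0 π t) (π' t) - f (traj f x0 π t) (π t)‖ := by
        have := norm_add_le (f (traj f x0 π' t) (π' t) - f (traj f x0 π t) (π' t))
          (f (traj f x0 π t) (π' t) - f (traj f x0 π t) (π t))
        simpa [traj, sub_add_sub_cancel] using this
      have h1 : ‖f (traj f x0 π' t) (π' t) - f (traj f x0 π t) (π' t)‖ ≤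
          Lx * ‖traj f x0 π' t - traj f x0 π t‖ :=
        hLx _ _ _ (hπ' t)
      have h2 : ‖f (traj f x0 π t) (π' t) - f (traj f x0 π t) (π t)‖ ≤
          Lu * ‖π' t - π t‖ :=
        hLu _ _ (hπ' t) _ (hπ t)
      have hS : (∑ k ∈ Finset.range (t + 1),
            Lx ^ k * Lu * ‖π' (t + 1 - 1 - k) - π (t + 1 - 1 - k)‖) =
          Lx * (∑ k ∈ Finset.range t, Lx ^ k * Lu * ‖π' (t - 1 - k) - π (t - 1 - k)‖)
            + Lu * ‖π' t - π t‖ := by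
        rw [Finset.sum_range_succ', Finset.mul_sum]
        congr 1
        · refine Finset.sum_congr rfl fun k hk => ?_
          have : t + 1 - 1 - (k + 1) = t - 1 - k := by omega
          rw [this]; ring
        · simp
      calc ‖traj f x0 π' (t + 1) - traj f x0 π (t + 1)‖
          ≤ Lx * ‖traj f x0 π' t - traj f x0 π t‖ + Lu * ‖π' t - π t‖ := by
            refine htri.trans (add_le_add h1 h2)
        _ ≤ Lx * (∑ k ∈ Finset.range t, Lx ^ k * Lu * ‖π' (t - 1 - k) - π (t - 1 - k)‖)
              + Lu * ‖π' t - π t‖ := by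
            gcongr
        _ = _ := hS.symm
  intro t _
  have heq : (∑ l ∈ Finset.Icc 1 t, Lx ^ (l - 1) * Lu * ‖π' (t - l) - π (t - l)‖) =
      ∑ k ∈ Finset.range t, Lx ^ k * Lu * ‖π' (t - 1 - k) - π (t - 1 - k)‖ := by
    rw [← Finset.Ico_add_one_right_eq_Icc, Finset.sum_Ico_eq_sum_range]
    refine Finset.sum_congr (by congr 1) fun k hk => ?_
    have h1 : 1 + k - 1 = k := by omega
    have h2 : t - (1 + k) = t - 1 - k := by omega
    rw [h1, h2]
  rw [heq]
  exact key t
end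
end

section
/- Suppose f : ℝⁿ × ℝᵐ → ℝⁿ satisfies ‖f(x,u) − f(x',u)‖ ≤ L_x‖x − x'‖ and ‖f(x,u) − f(x,u')‖ ≤ L_u‖u − u'‖ for all x, x' ∈ ℝⁿ and u, u' ∈ U, with L := max(L_x, L_u) > 0. Let x₀ ∈ X, let π = (u(t)) be a control policy, and let k₀ ∈ ℕ with k₀ ≥ 1 be such that φ^π_{x₀}(k₀) ∈ T and φ^π_{x₀}(t) ∈ X for all 0 ≤ t ≤ k₀. Let ε > 0 satisfy: the open ball of radius ε around φ^π_{x₀}(k₀) is contained in T, and the open ball of radius ε around φ^π_{x₀}(t) is contained in X for all 1 ≤ t ≤ k₀ − 1. Then for every δ with 0 < δ < ε / (L^{k₀} + L^{k₀−1} + ⋯ + L), every control policy π' = (u'(t)) with u'(t) ∈ U and ‖u'(t) − u(t)‖ < δ for all 0 ≤ t ≤ k₀ − 1 satisfies φ^{π'}_{x₀}(k₀) ∈ T and φ^{π'}_{x₀}(t) ∈ X for all 0 ≤ t ≤ k₀. -/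
open MeasureTheory Set

noncomputable section

/-- Robustness of reach-avoidance: any policy `π'` that stays `δ`-close to a
reach-avoiding policy `π` also reach-avoids. -/
theorem stmt_4 {n m : ℕ}
    (f : (Fin n → ℝ) → (Fin m → ℝ) → (Fin n → ℝ))
    (U : Set (Fin m → ℝ)) (hUc : IsCompact U)
    (X T : Set (Fin n → ℝ))
    (hXo : IsOpen X) (hXb : Bornology.IsBounded X)
    (hTo : IsOpen T) (hTb : Bornology.IsBounded T) (hTX : T ⊆ X)
    (Lx Lu L : ℝ) (hL : L = max Lx Lu) (hL0 : 0 < L)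
    (hLx : ∀ x x' : Fin n → ℝ, ∀ u ∈ U, ‖f x u - f x' u‖ ≤ Lx * ‖x - x'‖)
    (hLu : ∀ x : Fin n → ℝ, ∀ u ∈ U, ∀ u' ∈ U, ‖f x u - f x u'‖ ≤ Lu * ‖u - u'‖)
    (x0 : Fin n → ℝ) (hx0 : x0 ∈ X)
    (π : ℕ → (Fin m → ℝ)) (hπ : ∀ t, π t ∈ U)
    (k0 : ℕ) (hk0 : 1 ≤ k0)
    (hreach : traj f x0 π k0 ∈ T) (hsafe : ∀ t ≤ k0, traj f x0 π t ∈ X)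
    (ε : ℝ) (hε : 0 < ε)
    (hballT : Metric.ball (traj f x0 π k0) ε ⊆ T)
    (hballX : ∀ t, 1 ≤ t → t ≤ k0 - 1 → Metric.ball (traj f x0 π t) ε ⊆ X)
    (δ : ℝ) (hδ0 : 0 < δ) (hδ : δ < ε / ∑ i ∈ Finset.Icc 1 k0, L ^ i) :
    ∀ π' : ℕ → (Fin m → ℝ), (∀ t, π' t ∈ U) →
      (∀ t ≤ k0 - 1, ‖π' t - π t‖ < δ) →
      traj f x0 π' k0 ∈ T ∧ ∀ t ≤ k0, traj f x0 π' t ∈ X := by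

  intro π' hπ' hclose
  -- sum recursion lemma
  have hsum : ∀ t : ℕ, L * (∑ i ∈ Finset.Icc 1 t, L ^ i) + L
      = ∑ i ∈ Finset.Icc 1 (t+1), L ^ i := by
    intro t
    induction t with
    | zero => simp
    | succ t ih =>
      rw [Finset.sum_Icc_succ_top (by omega : 1 ≤ t+1+1),
        Finset.sum_Icc_succ_top (by omega : 1 ≤ t+1)]
      rw [Finset.sum_Icc_succ_top (by omega : 1 ≤ t+1)] at ih
      linear_combination ih
  have hSpos : 0 < ∑ i ∈ Finset.Icc 1 k0, L ^ i := by
    apply Finset.sum_pos (fun i _ => pow_pos hL0 i)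
    exact ⟨1, Finset.mem_Icc.mpr ⟨le_refl 1, hk0⟩⟩
  have hδS : δ * (∑ i ∈ Finset.Icc 1 k0, L ^ i) < ε := by
    rw [← lt_div_iff₀ hSpos]; exact hδ
  -- main error bound
  have key : ∀ t ≤ k0, ‖traj f x0 π' t - traj f x0 π t‖
      ≤ δ * ∑ i ∈ Finset.Icc 1 t, L ^ i := by
    intro t
    induction t with
    | zero => intro _; simp [traj]
    | succ t ih =>
      intro ht
      have ht' : t ≤ k0 := by omega
      have hih := ih ht'
      have hcl : ‖π' t - π t‖ < δ := hclose t (by omega)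
      have hLxL : Lx ≤ L := by rw [hL]; exact le_max_left _ _
      have hLuL : Lu ≤ L := by rw [hL]; exact le_max_right _ _
      have e1 : ‖f (traj f x0 π' t) (π' t) - f (traj f x0 π t) (π' t)‖
          ≤ Lx * ‖traj f x0 π' t - traj f x0 π t‖ := hLx _ _ _ (hπ' t)
      have e2 : ‖f (traj f x0 π t) (π' t) - f (traj f x0 π t) (π t)‖
          ≤ Lu * ‖π' t - π t‖ := hLu _ _ (hπ' t) _ (hπ t)
      have tri : ‖traj f x0 π' (t+1) - traj f x0 π (t+1)‖
          ≤ ‖f (traj f x0 π' t) (π' t) - f (traj f x0 π t) (π' t)‖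
            + ‖f (traj f x0 π t) (π' t) - f (traj f x0 π t) (π t)‖ := by
        have := norm_sub_le_norm_sub_add_norm_sub
          (f (traj f x0 π' t) (π' t)) (f (traj f x0 π t) (π' t))
          (f (traj f x0 π t) (π t))
        simpa [traj] using this
      have hnn : (0:ℝ) ≤ ‖traj f x0 π' t - traj f x0 π t‖ := norm_nonneg _
      calc ‖traj f x0 π' (t+1) - traj f x0 π (t+1)‖
          ≤ Lx * ‖traj f x0 π' t - traj f x0 π t‖ + Lu * ‖π' t - π t‖ := by
            linarith
        _ ≤ L * (δ * ∑ i ∈ Finset.Icc 1 t, L ^ i) + L * δ := by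
            have h1 : Lx * ‖traj f x0 π' t - traj f x0 π t‖
                ≤ L * (δ * ∑ i ∈ Finset.Icc 1 t, L ^ i) := by
              calc Lx * ‖traj f x0 π' t - traj f x0 π t‖
                  ≤ L * ‖traj f x0 π' t - traj f x0 π t‖ :=
                    mul_le_mul_of_nonneg_right hLxL hnn
                _ ≤ L * (δ * ∑ i ∈ Finset.Icc 1 t, L ^ i) :=
                    mul_le_mul_of_nonneg_left hih hL0.le
            have h2 : Lu * ‖π' t - π t‖ ≤ L * δ := by
              calc Lu * ‖π' t - π t‖ ≤ L * ‖π' t - π t‖ :=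
                    mul_le_mul_of_nonneg_right hLuL (norm_nonneg _)
                _ ≤ L * δ := mul_le_mul_of_nonneg_left hcl.le hL0.le
            linarith
        _ = δ * (L * (∑ i ∈ Finset.Icc 1 t, L ^ i) + L) := by ring
        _ = δ * ∑ i ∈ Finset.Icc 1 (t+1), L ^ i := by rw [hsum t]
  -- from the bound, trajectories stay ε-close
  have close : ∀ t ≤ k0, dist (traj f x0 π' t) (traj f x0 π t) < ε := by
    intro t ht
    rw [dist_eq_norm]
    calc ‖traj f x0 π' t - traj f x0 π t‖
        ≤ δ * ∑ i ∈ Finset.Icc 1 t, L ^ i := key t ht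
      _ ≤ δ * ∑ i ∈ Finset.Icc 1 k0, L ^ i := by
          apply mul_le_mul_of_nonneg_left _ hδ0.le
          exact Finset.sum_le_sum_of_subset_of_nonneg
            (Finset.Icc_subset_Icc_right ht)
            (fun i _ _ => (pow_pos hL0 i).le)
      _ < ε := hδS
  have hT' : traj f x0 π' k0 ∈ T :=
    hballT (Metric.mem_ball.mpr (close k0 le_rfl))
  refine ⟨hT', fun t ht => ?_⟩
  rcases Nat.eq_zero_or_pos t with h0 | h1
  · subst h0; simpa [traj] using hx0
  · rcases eq_or_lt_of_le ht with hk | hk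
    · subst hk; exact hTX hT'
    · exact hballX t h1 (by omega) (Metric.mem_ball.mpr (close t ht))
end
end

section
/- Let λ > 1 be a real number. Suppose f : ℝⁿ × ℝᵐ → ℝⁿ is Borel measurable, X and T ⊆ X are bounded open sets, X̂ is a Borel set with X̂ ⊇ {f(x₀,u) : x₀ ∈ X, u ∈ U} ∪ X, and P is a Borel probability measure on ℝᵐ with P(U) = 1. If there exists a bounded Borel measurable function v : X̂ → ℝ satisfying: (i) ∫ v(f(x,u)) dP(u) ≥ λ·v(x) for every x ∈ X\T; (ii) v(x) ≤ 0 for every x ∈ X̂\X; and (iii) v(x) ≤ 1 for every x ∈ T, then for every x₀ ∈ X with v(x₀) > 0 one has P^∞({π : ∃ k ∈ ℕ, φ^π_{x₀}(k) ∈ T and φ^π_{x₀}(l) ∈ X for all 0 ≤ l ≤ k}) > 0; that is, {x ∈ X : v(x) > 0} is a 0-reach-avoid set. -/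
open MeasureTheory Set

noncomputable section

/-!
Let `J k` be the mean of `v (x k)` over the control sequences whose trajectory stays in `X \ T`
up to time `k`, i.e. of `v` along the trajectory killed when it leaves `X \ T`; `J 0 = v x₀ > 0`
and `J k ≤ sup |v|`. If the reach-avoid event were null, a trajectory leaving `X \ T` at time
`k + 1` would leave `X` and land where `v ≤ 0`, so, `u k` being independent of `u 0, …, u (k-1)`,
the growth condition integrates to `J (k + 1) ≥ λ J k`. Hence `J k ≥ λ ^ k v x₀ → ∞`, which is
absurd. The independence enters as the invariance of `P^∞` under resampling one coordinate.
-/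

namespace MeasureTheory.Measure

section NatIndexed

variable {X : ℕ → Type*} [∀ i, MeasurableSpace (X i)]
  (μ : (i : ℕ) → Measure (X i)) [∀ i, IsProbabilityMeasure (μ i)]

theorem eq_infinitePi_of_forall_lt {ν : Measure (Π i, X i)}
    (hν : ∀ (k : ℕ) (s : (i : ℕ) → Set (X i)), (∀ i, MeasurableSet (s i)) →
      ν {ω | ∀ i < k, ω i ∈ s i} = ∏ i ∈ Finset.range k, μ i (s i)) :
    ν = infinitePi μ := by
  classical
  refine eq_infinitePi μ fun s t ht => ?_
  obtain ⟨k, hsk⟩ := s.exists_nat_subset_range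
  have hpi : Set.pi (s : Set ℕ) t = {ω | ∀ i < k, ω i ∈ if i ∈ s then t i else univ} := by
    ext ω
    simp only [Set.mem_pi, Finset.mem_coe, mem_ofPred_eq]
    refine ⟨fun h i _ => ?_, fun h i hi => ?_⟩
    · split_ifs with hi
      exacts [h i hi, mem_univ _]
    · simpa [hi] using h i (Finset.mem_range.1 (hsk hi))
  rw [hpi, hν k _ fun i => by split_ifs; exacts [ht i, .univ]]
  simp only [apply_ite (μ _), measure_univ, Finset.prod_ite_mem, Finset.inter_eq_right.2 hsk]

end NatIndexed

section Update

variable {ι : Type*} [DecidableEq ι] {X : ι → Type*} [∀ i, MeasurableSpace (X i)]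
  (μ : (i : ι) → Measure (X i)) [∀ i, IsProbabilityMeasure (μ i)]

theorem measurePreserving_update_infinitePi (k : ι) :
    MeasurePreserving (fun p : (Π i, X i) × X k => Function.update p.1 k p.2)
      ((infinitePi μ).prod (μ k)) (infinitePi μ) := by
  refine ⟨measurable_update', (eq_infinitePi μ fun s t ht => ?_)⟩
  rw [map_apply measurable_update' (.pi s.countable_toSet fun i _ => ht i)]
  by_cases hk : k ∈ s
  · have hpre : (fun p : (Π i, X i) × X k => Function.update p.1 k p.2) ⁻¹' Set.pi s t
        = Set.pi (s.erase k : Set ι) t ×ˢ t k := by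
      ext ⟨ω, a⟩
      simp only [mem_preimage, Set.mem_pi, Finset.mem_coe, Finset.mem_erase, mem_prod]
      refine ⟨fun h => ⟨fun i hi => ?_, by simpa using h k hk⟩, fun ⟨h, ha⟩ i hi => ?_⟩
      · simpa [Function.update_of_ne hi.1] using h i hi.2
      · rcases eq_or_ne i k with rfl | hik
        · simpa using ha
        · simpa [Function.update_of_ne hik] using h i ⟨hik, hi⟩
    rw [hpre, prod_prod, infinitePi_pi μ fun i _ => ht i, Finset.prod_erase_mul _ _ hk]
  · have hpre : (fun p : (Π i, X i) × X k => Function.update p.1 k p.2) ⁻¹' Set.pi s t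
        = Set.pi (s : Set ι) t ×ˢ univ := by
      ext ⟨ω, a⟩
      simp only [mem_preimage, Set.mem_pi, Finset.mem_coe, mem_prod, mem_univ, and_true]
      refine forall₂_congr fun i hi => ?_
      rw [Function.update_of_ne (ne_of_mem_of_not_mem hi hk)]
    rw [hpre, prod_prod, infinitePi_pi μ fun i _ => ht i, measure_univ, mul_one]

theorem integral_comp_eval_infinitePi {E : Type*} [NormedAddCommGroup E] [NormedSpace ℝ E]
    (k : ι) {H : (Π i, X i) → X k → E} (hHm : StronglyMeasurable (Function.uncurry H))
    (hHi : Integrable (Function.uncurry H) ((infinitePi μ).prod (μ k)))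
    (hH : ∀ ω a, H (Function.update ω k a) a = H ω a) :
    ∫ ω, H ω (ω k) ∂infinitePi μ = ∫ ω, ∫ a, H ω a ∂μ k ∂infinitePi μ := by
  have hupd := measurePreserving_update_infinitePi μ k
  have hg : StronglyMeasurable fun ω : Π i, X i => H ω (ω k) :=
    hHm.comp_measurable (measurable_id.prodMk (measurable_pi_apply k))
  calc ∫ ω, H ω (ω k) ∂infinitePi μ
      = ∫ p, H (Function.update p.1 k p.2) (Function.update p.1 k p.2 k)
          ∂(infinitePi μ).prod (μ k) := by
        conv_lhs => rw [← hupd.map_eq]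
        exact integral_map hupd.aemeasurable hg.aestronglyMeasurable
    _ = ∫ p, Function.uncurry H p ∂(infinitePi μ).prod (μ k) := by
        simp only [Function.update_self, hH]; rfl
    _ = ∫ ω, ∫ a, H ω a ∂μ k ∂infinitePi μ := integral_prod _ hHi

end Update

end MeasureTheory.Measure

section Trajectory

variable {n m : ℕ} {f : (Fin n → ℝ) → (Fin m → ℝ) → (Fin n → ℝ)} {x0 : Fin n → ℝ}

theorem traj_congr {π π' : ℕ → Fin m → ℝ} :
    ∀ {t : ℕ}, (∀ i < t, π i = π' i) → traj f x0 π t = traj f x0 π' t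
  | 0, _ => rfl
  | t + 1, h => by
    simp only [traj, traj_congr fun i hi => h i (Nat.lt_succ_of_lt hi), h t t.lt_succ_self]

theorem traj_update_of_le (π : ℕ → Fin m → ℝ) (a : Fin m → ℝ) {k t : ℕ} (ht : t ≤ k) :
    traj f x0 (Function.update π k a) t = traj f x0 π t :=
  traj_congr fun i hi => Function.update_of_ne (by omega) a π

theorem measurable_traj (hf : Measurable fun p : (Fin n → ℝ) × (Fin m → ℝ) => f p.1 p.2) :
    ∀ t, Measurable fun π : ℕ → Fin m → ℝ => traj f x0 π t
  | 0 => measurable_const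
  | t + 1 => hf.comp ((measurable_traj hf t).prodMk (measurable_pi_apply t))

variable (f x0) in
def stayIn (A : Set (Fin n → ℝ)) (k : ℕ) : Set (ℕ → Fin m → ℝ) :=
  {π | ∀ l ≤ k, traj f x0 π l ∈ A}

variable (f x0) in
def reachAvoid (X T : Set (Fin n → ℝ)) : Set (ℕ → Fin m → ℝ) :=
  {π | ∃ k, traj f x0 π k ∈ T ∧ ∀ l ≤ k, traj f x0 π l ∈ X}

theorem measurableSet_stayIn (hf : Measurable fun p : (Fin n → ℝ) × (Fin m → ℝ) => f p.1 p.2)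
    {A : Set (Fin n → ℝ)} (hA : MeasurableSet A) (k : ℕ) : MeasurableSet (stayIn f x0 A k) := by
  simp only [stayIn, ofPred_forall]
  exact .iInter fun l => .iInter fun _ => measurable_traj hf l hA

theorem update_mem_stayIn_iff {A : Set (Fin n → ℝ)} {π : ℕ → Fin m → ℝ} {k : ℕ}
    (a : Fin m → ℝ) : Function.update π k a ∈ stayIn f x0 A k ↔ π ∈ stayIn f x0 A k :=
  forall₂_congr fun _ hl => by rw [traj_update_of_le π a hl]

theorem stayIn_succ_of_mem {A : Set (Fin n → ℝ)} {π : ℕ → Fin m → ℝ} {k : ℕ}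
    (hπ : π ∈ stayIn f x0 A k) (h : traj f x0 π (k + 1) ∈ A) : π ∈ stayIn f x0 A (k + 1) := by
  intro l hl
  rcases hl.lt_or_eq with hl | rfl
  exacts [hπ l (Nat.le_of_lt_succ hl), h]

theorem mem_reachAvoid_of_stayIn {X T : Set (Fin n → ℝ)} (hTX : T ⊆ X) {π : ℕ → Fin m → ℝ}
    {k : ℕ} (hπ : π ∈ stayIn f x0 (X \ T) k) (h : traj f x0 π (k + 1) ∈ T) :
    π ∈ reachAvoid f x0 X T :=
  ⟨k + 1, h, stayIn_succ_of_mem (A := X) (fun l hl => (hπ l hl).1) (hTX h)⟩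

variable (f x0) in
def killedValue (A : Set (Fin n → ℝ)) (v : (Fin n → ℝ) → ℝ) (μ : Measure (ℕ → Fin m → ℝ))
    (k : ℕ) : ℝ :=
  ∫ π, (stayIn f x0 A k).indicator (fun π => v (traj f x0 π k)) π ∂μ

section Bounded

variable {A : Set (Fin n → ℝ)} {v : (Fin n → ℝ) → ℝ} {M : ℝ}
  {μ : Measure (ℕ → Fin m → ℝ)}

theorem killedValue_zero [IsProbabilityMeasure μ] (hx0 : x0 ∈ A) :
    killedValue f x0 A v μ 0 = v x0 := by
  have h : stayIn f x0 A 0 = univ := eq_univ_of_forall fun _ l hl => by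
    rwa [Nat.le_zero.1 hl]
  simp [killedValue, h, traj]

theorem killedValue_le [IsProbabilityMeasure μ] (hvM : ∀ x, |v x| ≤ M) (k : ℕ) :
    killedValue f x0 A v μ k ≤ M := by
  have hbound : ∀ π, ‖(stayIn f x0 A k).indicator (fun π => v (traj f x0 π k)) π‖ ≤ M :=
    fun π => (norm_indicator_le_norm_self _ π).trans (hvM _)
  refine (le_abs_self _).trans ?_
  simpa [killedValue] using norm_integral_le_of_norm_le_const (μ := μ) (ae_of_all _ hbound)

theorem integrable_indicator_stayIn [IsFiniteMeasure μ]
    (hf : Measurable fun p : (Fin n → ℝ) × (Fin m → ℝ) => f p.1 p.2) (hA : MeasurableSet A)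
    (hvm : Measurable v) (hvM : ∀ x, |v x| ≤ M) (k t : ℕ) :
    Integrable ((stayIn f x0 A k).indicator fun π => v (traj f x0 π t)) μ :=
  (Integrable.of_bound (hvm.comp (measurable_traj hf t)).aestronglyMeasurable M
    (ae_of_all _ fun _ => hvM _)).indicator (measurableSet_stayIn hf hA k)

theorem integral_indicator_le_killedValue_succ [IsFiniteMeasure μ]
    (hf : Measurable fun p : (Fin n → ℝ) × (Fin m → ℝ) => f p.1 p.2) (hA : MeasurableSet A)
    (hvm : Measurable v) (hvM : ∀ x, |v x| ≤ M) {k : ℕ}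
    (hexit : ∀ᵐ π ∂μ, π ∈ stayIn f x0 A k → traj f x0 π (k + 1) ∉ A →
      v (traj f x0 π (k + 1)) ≤ 0) :
    ∫ π, (stayIn f x0 A k).indicator (fun π => v (traj f x0 π (k + 1))) π ∂μ ≤
      killedValue f x0 A v μ (k + 1) := by
  refine integral_mono_ae (integrable_indicator_stayIn hf hA hvm hvM k _)
    (integrable_indicator_stayIn hf hA hvm hvM _ _) ?_
  filter_upwards [hexit] with π hπ
  by_cases hk : π ∈ stayIn f x0 A k
  · by_cases hA' : traj f x0 π (k + 1) ∈ A
    · rw [indicator_of_mem hk, indicator_of_mem (stayIn_succ_of_mem hk hA')]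
    · rw [indicator_of_mem hk, indicator_of_notMem fun h : π ∈ stayIn f x0 A (k + 1) =>
        hA' (h _ le_rfl)]
      exact hπ hk hA'
  · rw [indicator_of_notMem hk, indicator_of_notMem fun h : π ∈ stayIn f x0 A (k + 1) =>
      hk fun l hl => h l (hl.trans k.le_succ)]

theorem lam_mul_killedValue_le (P : Measure (Fin m → ℝ)) [IsProbabilityMeasure P] {lam : ℝ}
    (hf : Measurable fun p : (Fin n → ℝ) × (Fin m → ℝ) => f p.1 p.2) (hA : MeasurableSet A)
    (hvm : Measurable v) (hvM : ∀ x, |v x| ≤ M)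
    (hgrow : ∀ x ∈ A, lam * v x ≤ ∫ u, v (f x u) ∂P) (k : ℕ) :
    lam * killedValue f x0 A v (Measure.infinitePi fun _ => P) k ≤
      ∫ π, (stayIn f x0 A k).indicator (fun π => v (traj f x0 π (k + 1))) π
        ∂Measure.infinitePi fun _ => P := by
  set H : (ℕ → Fin m → ℝ) → (Fin m → ℝ) → ℝ :=
    fun π a => (stayIn f x0 A k).indicator (fun π => v (f (traj f x0 π k) a)) π
  have hxk : Measurable fun p : (ℕ → Fin m → ℝ) × (Fin m → ℝ) => traj f x0 p.1 k :=
    (measurable_traj hf k).comp measurable_fst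
  have hHm : Measurable (Function.uncurry H) :=
    (hvm.comp (hf.comp (hxk.prodMk measurable_snd))).indicator
      (measurable_fst (measurableSet_stayIn hf hA k))
  have hHi : Integrable (Function.uncurry H) ((Measure.infinitePi fun _ => P).prod P) :=
    Integrable.of_bound hHm.aestronglyMeasurable M (ae_of_all _ fun p =>
      (norm_indicator_le_norm_self (fun π => v (f (traj f x0 π k) p.2)) p.1).trans (hvM _))
  have hupd : ∀ π a, H (Function.update π k a) a = H π a := fun π a => by
    by_cases hπ : π ∈ stayIn f x0 A k
    · simp only [H, indicator_of_mem hπ, indicator_of_mem ((update_mem_stayIn_iff a).2 hπ),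
        traj_update_of_le π a le_rfl]
    · simp only [H, indicator_of_notMem hπ,
        indicator_of_notMem (mt (update_mem_stayIn_iff a).1 hπ)]
  have hpointwise : ∀ π, lam * (stayIn f x0 A k).indicator (fun π => v (traj f x0 π k)) π ≤
      ∫ a, H π a ∂P := fun π => by
    by_cases hπ : π ∈ stayIn f x0 A k
    · simpa [H, indicator_of_mem hπ] using hgrow _ (hπ k le_rfl)
    · simp [H, indicator_of_notMem hπ]
  calc lam * killedValue f x0 A v (Measure.infinitePi fun _ => P) k
      = ∫ π, lam * (stayIn f x0 A k).indicator (fun π => v (traj f x0 π k)) π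
          ∂Measure.infinitePi fun _ => P := (integral_const_mul _ _).symm
    _ ≤ ∫ π, ∫ a, H π a ∂P ∂Measure.infinitePi fun _ => P :=
        integral_mono ((integrable_indicator_stayIn hf hA hvm hvM k k).const_mul lam)
          hHi.integral_prod_left hpointwise
    _ = ∫ π, H π (π k) ∂Measure.infinitePi fun _ => P :=
        (Measure.integral_comp_eval_infinitePi _ k hHm.stronglyMeasurable hHi hupd).symm

end Bounded

theorem infinitePi_reachAvoid_pos {lam M : ℝ} (hlam : 1 < lam)
    (hf : Measurable fun p : (Fin n → ℝ) × (Fin m → ℝ) => f p.1 p.2) {X T : Set (Fin n → ℝ)}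
    (hX : MeasurableSet X) (hT : MeasurableSet T) (hTX : T ⊆ X)
    (P : Measure (Fin m → ℝ)) [IsProbabilityMeasure P] {w : (Fin n → ℝ) → ℝ}
    (hwm : Measurable w) (hwM : ∀ x, |w x| ≤ M)
    (hgrow : ∀ x ∈ X \ T, lam * w x ≤ ∫ u, w (f x u) ∂P) (hout : ∀ x ∉ X, w x ≤ 0)
    (hx0 : x0 ∈ X) (hpos : 0 < w x0) :
    0 < Measure.infinitePi (fun _ => P) (reachAvoid f x0 X T) := by
  set μ := Measure.infinitePi fun _ : ℕ => P
  by_cases hx0T : x0 ∈ T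
  · have : reachAvoid f x0 X T = univ :=
      eq_univ_of_forall fun π => ⟨0, hx0T, fun l hl => by rwa [Nat.le_zero.1 hl]⟩
    simp [this]
  refine pos_iff_ne_zero.2 fun hnull => ?_
  have hexit : ∀ k, ∀ᵐ π ∂μ, π ∈ stayIn f x0 (X \ T) k → traj f x0 π (k + 1) ∉ X \ T →
      w (traj f x0 π (k + 1)) ≤ 0 := fun k => by
    filter_upwards [measure_eq_zero_iff_ae_notMem.1 hnull] with π hπ hstay hleave
    refine hout _ fun hX' => hπ (mem_reachAvoid_of_stayIn hTX hstay ?_)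
    by_contra hT'
    exact hleave ⟨hX', hT'⟩
  have hgrowth : ∀ k, lam ^ k * w x0 ≤ killedValue f x0 (X \ T) w μ k := by
    intro k
    induction k with
    | zero => simp [killedValue_zero (A := X \ T) ⟨hx0, hx0T⟩]
    | succ k ih =>
      calc lam ^ (k + 1) * w x0 = lam * (lam ^ k * w x0) := by ring
        _ ≤ lam * killedValue f x0 (X \ T) w μ k := by gcongr
        _ ≤ _ := lam_mul_killedValue_le P hf (hX.diff hT) hwm hwM hgrow k
        _ ≤ _ := integral_indicator_le_killedValue_succ hf (hX.diff hT) hwm hwM (hexit k)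
  obtain ⟨k, hk⟩ := pow_unbounded_of_one_lt (M / w x0) hlam
  linarith [hgrowth k, killedValue_le (f := f) (x0 := x0) (A := X \ T) (μ := μ) hwM k,
    (div_lt_iff₀ hpos).1 hk]

end Trajectory

theorem stmt_6_general {n m : ℕ} (lam : ℝ) (hlam : 1 < lam)
    (f : (Fin n → ℝ) → (Fin m → ℝ) → (Fin n → ℝ))
    (hf : Measurable fun p : (Fin n → ℝ) × (Fin m → ℝ) => f p.1 p.2)
    (U : Set (Fin m → ℝ)) (hUc : IsCompact U)
    (X T Xhat : Set (Fin n → ℝ))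
    (hXo : IsOpen X)
    (hTo : IsOpen T) (hTX : T ⊆ X)
    (hXhatm : MeasurableSet Xhat)
    (hXhat1 : ∀ x ∈ X, ∀ u ∈ U, f x u ∈ Xhat) (hXhat2 : X ⊆ Xhat)
    (P : Measure (Fin m → ℝ)) [IsProbabilityMeasure P] (hPU : P U = 1)
    -- `Pinf` is the i.i.d. product measure `P^∞` on the sequence space,
    -- characterized on cylinder sets.
    (Pinf : Measure (ℕ → (Fin m → ℝ)))
    (hPinf : ∀ (k : ℕ) (s : ℕ → Set (Fin m → ℝ)), (∀ i, MeasurableSet (s i)) →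
      Pinf {ω | ∀ i < k, ω i ∈ s i} = ∏ i ∈ Finset.range k, P (s i))
    (v : (Fin n → ℝ) → ℝ) (hvm : Measurable v)
    (hvb : ∃ M : ℝ, ∀ x ∈ Xhat, |v x| ≤ M)
    (h1 : ∀ x ∈ X \ T, lam * v x ≤ ∫ u, v (f x u) ∂P)
    (h2 : ∀ x ∈ Xhat \ X, v x ≤ 0) :
    ∀ x0 ∈ X, 0 < v x0 →
      0 < Pinf {π : ℕ → (Fin m → ℝ) |
        ∃ k : ℕ, traj f x0 π k ∈ T ∧ ∀ l ≤ k, traj f x0 π l ∈ X} := by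
  intro x0 hx0 hv0
  obtain rfl := Measure.eq_infinitePi_of_forall_lt (fun _ => P) hPinf
  obtain ⟨M, hM⟩ := hvb
  have hUae : ∀ᵐ u ∂P, u ∈ U :=
    (ae_mem_iff_measure_eq hUc.measurableSet.nullMeasurableSet).2 (by rw [hPU, measure_univ])
  -- Cut off outside `Xhat`, `v` becomes bounded and `≤ 0` off `X`, while the integrals in `h1`
  -- do not change because `f x u ∈ Xhat` for almost every `u`.
  refine infinitePi_reachAvoid_pos (w := Xhat.indicator v) (M := M) hlam hf hXo.measurableSet
    hTo.measurableSet hTX P (hvm.indicator hXhatm) (fun x => ?_) (fun x hx => ?_) (fun x hx => ?_)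
    hx0 (by rwa [indicator_of_mem (hXhat2 hx0)])
  · by_cases hx : x ∈ Xhat
    · simpa [indicator_of_mem hx] using hM x hx
    · simpa [indicator_of_notMem hx] using (abs_nonneg _).trans (hM x0 (hXhat2 hx0))
  · rw [indicator_of_mem (hXhat2 hx.1)]
    refine (h1 x hx).trans_eq (integral_congr_ae ?_)
    filter_upwards [hUae] with u hu
    rw [indicator_of_mem (hXhat1 x hx.1 u hu)]
  · by_cases hxh : x ∈ Xhat
    · simpa [indicator_of_mem hxh] using h2 x ⟨hxh, hx⟩
    · simp [indicator_of_notMem hxh]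

/-- Lemma 1: the expectation-based Lyapunov-like condition (with the extra
requirement `v ≤ 1` on the target) yields a `0`-reach-avoid set. -/
theorem stmt_6 {n m : ℕ} (lam : ℝ) (hlam : 1 < lam)
    (f : (Fin n → ℝ) → (Fin m → ℝ) → (Fin n → ℝ))
    (hf : Measurable fun p : (Fin n → ℝ) × (Fin m → ℝ) => f p.1 p.2)
    (U : Set (Fin m → ℝ)) (hUc : IsCompact U) (hUne : U.Nonempty)
    (X T Xhat : Set (Fin n → ℝ))
    (hXo : IsOpen X) (hXb : Bornology.IsBounded X)
    (hTo : IsOpen T) (hTb : Bornology.IsBounded T) (hTX : T ⊆ X)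
    (hXhatm : MeasurableSet Xhat)
    (hXhat1 : ∀ x ∈ X, ∀ u ∈ U, f x u ∈ Xhat) (hXhat2 : X ⊆ Xhat)
    (P : Measure (Fin m → ℝ)) [IsProbabilityMeasure P] (hPU : P U = 1)
    -- `Pinf` is the i.i.d. product measure `P^∞` on the sequence space,
    -- characterized on cylinder sets.
    (Pinf : Measure (ℕ → (Fin m → ℝ))) [IsProbabilityMeasure Pinf]
    (hPinf : ∀ (k : ℕ) (s : ℕ → Set (Fin m → ℝ)), (∀ i, MeasurableSet (s i)) →
      Pinf {ω | ∀ i < k, ω i ∈ s i} = ∏ i ∈ Finset.range k, P (s i))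
    (v : (Fin n → ℝ) → ℝ) (hvm : Measurable v)
    (hvb : ∃ M : ℝ, ∀ x ∈ Xhat, |v x| ≤ M)
    (h1 : ∀ x ∈ X \ T, lam * v x ≤ ∫ u, v (f x u) ∂P)
    (h2 : ∀ x ∈ Xhat \ X, v x ≤ 0)
    (h3 : ∀ x ∈ T, v x ≤ 1) :
    ∀ x0 ∈ X, 0 < v x0 →
      0 < Pinf {π : ℕ → (Fin m → ℝ) |
        ∃ k : ℕ, traj f x0 π k ∈ T ∧ ∀ l ≤ k, traj f x0 π l ∈ X} :=
  stmt_6_general lam hlam f hf U hUc X T Xhat hXo hTo hTX hXhatm hXhat1 hXhat2 P hPU Pinf hPinf v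
    hvm hvb h1 h2
end
end

section
/- Let λ ∈ (0,1), let f : ℝⁿ × ℝᵐ → ℝⁿ be continuous, and let U ⊆ ℝᵐ be compact and nonempty. Suppose B : ℝⁿ → ℝ is continuous and satisfies: (i) max_{u∈U} B(f(x,u)) ≥ λ·B(x) for every x ∈ D; (ii) B(x) ≤ 0 for every x ∈ X_U; and (iii) B(x) > 0 for every x ∈ X_I. Then the system is safe: for every x₀ ∈ X_I there exists a control policy π such that there is no time t ∈ ℕ with φ^π_{x₀}(t) ∈ X_U and φ^π_{x₀}(s) ∈ D for all 0 ≤ s < t. -/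
/-! The set `{x | 0 < B x}` is disjoint from the unsafe set, and condition (i) shows that from any
of its points in `D` some admissible control keeps the state in it: `B (f x u)` cannot be `≤ 0` for
all `u ∈ U`, since then the supremum would be `≤ 0 < λ B x`. Choosing such a control at every
step, the trajectory cannot reach the unsafe set while it stays in `D`. -/

open MeasureTheory Set

noncomputable section

theorem Real.exists_pos_mem_of_sSup_pos {S : Set ℝ} (hS : 0 < sSup S) : ∃ y ∈ S, 0 < y := by
  by_contra! h
  exact hS.not_ge (Real.sSup_nonpos h)

theorem traj_feedback_eq_iterate {n m : ℕ} (f : (Fin n → ℝ) → (Fin m → ℝ) → (Fin n → ℝ))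
    (g : (Fin n → ℝ) → (Fin m → ℝ)) (x0 : Fin n → ℝ) (t : ℕ) :
    traj f x0 (fun s => g ((fun x => f x (g x))^[s] x0)) t = (fun x => f x (g x))^[t] x0 := by
  induction t with
  | zero => rfl
  | succ t ih => rw [traj, ih, Function.iterate_succ_apply']

theorem exists_policy_traj_mem_of_controlledInvariant {n m : ℕ}
    {f : (Fin n → ℝ) → (Fin m → ℝ) → (Fin n → ℝ)} {U : Set (Fin m → ℝ)} (hU : U.Nonempty)
    {D K : Set (Fin n → ℝ)} (hK : ∀ x ∈ D ∩ K, ∃ u ∈ U, f x u ∈ K)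
    {x0 : Fin n → ℝ} (hx0 : x0 ∈ K) :
    ∃ π : ℕ → (Fin m → ℝ), (∀ t, π t ∈ U) ∧
      ∀ t, (∀ s < t, traj f x0 π s ∈ D) → traj f x0 π t ∈ K := by
  have feedback : ∀ x, ∃ u ∈ U, x ∈ D ∩ K → f x u ∈ K := by
    intro x
    by_cases hx : x ∈ D ∩ K
    · obtain ⟨u, hu, hfu⟩ := hK x hx
      exact ⟨u, hu, fun _ => hfu⟩
    · exact ⟨hU.some, hU.some_mem, fun h => absurd h hx⟩
  choose g hgU hgK using feedback
  refine ⟨fun s => g ((fun x => f x (g x))^[s] x0), fun _ => hgU _, fun t hD => ?_⟩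
  simp only [traj_feedback_eq_iterate] at hD ⊢
  induction t with
  | zero => exact hx0
  | succ t ih =>
    rw [Function.iterate_succ_apply']
    exact hgK _ ⟨hD t t.lt_succ_self, ih fun s hs => hD s (hs.trans t.lt_succ_self)⟩

theorem stmt_10_general {n m : ℕ} (lam : ℝ) (hlam0 : 0 < lam)
    (f : (Fin n → ℝ) → (Fin m → ℝ) → (Fin n → ℝ))
    (U : Set (Fin m → ℝ)) (hUne : U.Nonempty)
    (D XI XU : Set (Fin n → ℝ))
    (B : (Fin n → ℝ) → ℝ)
    (h1 : ∀ x ∈ D, lam * B x ≤ sSup ((fun u => B (f x u)) '' U))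
    (h2 : ∀ x ∈ XU, B x ≤ 0)
    (h3 : ∀ x ∈ XI, 0 < B x) :
    ∀ x0 ∈ XI, ∃ π : ℕ → (Fin m → ℝ), (∀ t, π t ∈ U) ∧
      ¬ ∃ t : ℕ, traj f x0 π t ∈ XU ∧ ∀ s < t, traj f x0 π s ∈ D := by
  intro x0 hx0
  have invariant : ∀ x ∈ D ∩ {x | 0 < B x}, ∃ u ∈ U, f x u ∈ {x | 0 < B x} := by
    rintro x ⟨hxD, hxB⟩
    obtain ⟨_, ⟨u, hu, rfl⟩, hpos⟩ :=
      Real.exists_pos_mem_of_sSup_pos ((mul_pos hlam0 hxB).trans_le (h1 x hxD))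
    exact ⟨u, hu, hpos⟩
  obtain ⟨π, hπU, hπ⟩ := exists_policy_traj_mem_of_controlledInvariant hUne invariant (h3 x0 hx0)
  exact ⟨π, hπU, fun ⟨t, htU, htD⟩ => (h2 _ htU).not_gt (hπ t htD)⟩

/-- Proposition 4: a maximization-based control barrier certificate implies
safety of the discrete-time control system. -/
theorem stmt_10 {n m : ℕ} (lam : ℝ) (hlam0 : 0 < lam) (hlam1 : lam < 1)
    (f : (Fin n → ℝ) → (Fin m → ℝ) → (Fin n → ℝ))
    (hf : Continuous fun p : (Fin n → ℝ) × (Fin m → ℝ) => f p.1 p.2)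
    (U : Set (Fin m → ℝ)) (hUc : IsCompact U) (hUne : U.Nonempty)
    (D XI XU : Set (Fin n → ℝ)) (hXI : XI ⊆ D) (hXU : XU ⊆ D)
    (hdisj : XI ∩ XU = ∅)
    (B : (Fin n → ℝ) → ℝ) (hB : Continuous B)
    (h1 : ∀ x ∈ D, lam * B x ≤ sSup ((fun u => B (f x u)) '' U))
    (h2 : ∀ x ∈ XU, B x ≤ 0)
    (h3 : ∀ x ∈ XI, 0 < B x) :
    ∀ x0 ∈ XI, ∃ π : ℕ → (Fin m → ℝ), (∀ t, π t ∈ U) ∧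
      ¬ ∃ t : ℕ, traj f x0 π t ∈ XU ∧ ∀ s < t, traj f x0 π s ∈ D :=
  stmt_10_general lam hlam0 f U hUne D XI XU B h1 h2 h3
end
end

section
/- Let λ ∈ (0,1), let f : ℝⁿ × ℝᵐ → ℝⁿ be continuous, let U ⊆ ℝᵐ be compact and nonempty, and let P be a Borel probability measure on ℝᵐ with P(U) = 1. Suppose B : ℝⁿ → ℝ is continuous and satisfies: (i) ∫ B(f(x,u)) dP(u) ≥ λ·B(x) for every x ∈ D; (ii) B(x) ≤ 0 for every x ∈ X_U; and (iii) B(x) > 0 for every x ∈ X_I. Then the system is safe: for every x₀ ∈ X_I there exists a control policy π such that there is no time t ∈ ℕ with φ^π_{x₀}(t) ∈ X_U and φ^π_{x₀}(s) ∈ D for all 0 ≤ s < t. -/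
open MeasureTheory Set

noncomputable section

/-- Theorem 2: an expectation-based control barrier certificate implies
safety of the discrete-time control system. -/
theorem stmt_11 {n m : ℕ} (lam : ℝ) (hlam0 : 0 < lam) (hlam1 : lam < 1)
    (f : (Fin n → ℝ) → (Fin m → ℝ) → (Fin n → ℝ))
    (hf : Continuous fun p : (Fin n → ℝ) × (Fin m → ℝ) => f p.1 p.2)
    (U : Set (Fin m → ℝ)) (hUc : IsCompact U) (hUne : U.Nonempty)
    (P : Measure (Fin m → ℝ)) [IsProbabilityMeasure P] (hPU : P U = 1)
    (D XI XU : Set (Fin n → ℝ)) (hXI : XI ⊆ D) (hXU : XU ⊆ D)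
    (hdisj : XI ∩ XU = ∅)
    (B : (Fin n → ℝ) → ℝ) (hB : Continuous B)
    (h1 : ∀ x ∈ D, lam * B x ≤ ∫ u, B (f x u) ∂P)
    (h2 : ∀ x ∈ XU, B x ≤ 0)
    (h3 : ∀ x ∈ XI, 0 < B x) :
    ∀ x0 ∈ XI, ∃ π : ℕ → (Fin m → ℝ), (∀ t, π t ∈ U) ∧
      ¬ ∃ t : ℕ, traj f x0 π t ∈ XU ∧ ∀ s < t, traj f x0 π s ∈ D := by
  intro x0 hx0
  have hUcompl : P Uᶜ = 0 := by
    have := measure_compl (μ := P) hUc.isClosed.measurableSet (measure_ne_top P U)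
    simp [hPU, this]
  -- key existence lemma
  have key : ∀ x : Fin n → ℝ, ∃ u, u ∈ U ∧ (x ∈ D → lam * B x ≤ B (f x u)) := by
    intro x
    by_cases hxD : x ∈ D
    · by_contra hcon
      push_neg at hcon
      have hlt : ∀ u ∈ U, B (f x u) < lam * B x := fun u hu => (hcon u hu).2
      -- continuous function on compact set attains max
      have hg : Continuous fun u => B (f x u) := by
        exact hB.comp (hf.comp (Continuous.prodMk_right x))
      obtain ⟨u0, hu0U, hmax⟩ := hUc.exists_isMaxOn hUne hg.continuousOn
      set M := B (f x u0) with hM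
      have hMlt : M < lam * B x := hlt u0 hu0U
      have hle_ae : ∀ᵐ u ∂P, B (f x u) ≤ M := by
        filter_upwards [measure_eq_zero_iff_ae_notMem.mp hUcompl] with u hu
        exact hmax (by simpa using hu)
      have hCbound : ∃ C, ∀ u ∈ U, |B (f x u)| ≤ C := by
        obtain ⟨u1, hu1U, hmax1⟩ := hUc.exists_isMaxOn hUne
          ((continuous_abs.comp hg).continuousOn)
        exact ⟨|B (f x u1)|, fun u hu => hmax1 hu⟩
      obtain ⟨C, hC⟩ := hCbound
      have hint : Integrable (fun u => B (f x u)) P := by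
        refine ⟨hg.aestronglyMeasurable, ?_⟩
        apply MeasureTheory.HasFiniteIntegral.of_bounded (C := C)
        filter_upwards [measure_eq_zero_iff_ae_notMem.mp hUcompl] with u hu
        exact hC u (by simpa using hu)
      have hle : ∫ u, B (f x u) ∂P ≤ M := by
        calc ∫ u, B (f x u) ∂P ≤ ∫ _u, M ∂P :=
              integral_mono_ae hint (integrable_const M) hle_ae
          _ = M := by simp
      exact absurd (le_trans (h1 x hxD) hle) (not_le.mpr hMlt)
    · obtain ⟨u, hu⟩ := hUne
      exact ⟨u, hu, fun h => absurd h hxD⟩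
  classical
  choose g hgU hgB using key
  -- recursively defined state sequence
  let X : ℕ → (Fin n → ℝ) := fun t => Nat.rec x0 (fun _ x => f x (g x)) t
  have hX0 : X 0 = x0 := rfl
  have hXsucc : ∀ t, X (t + 1) = f (X t) (g (X t)) := fun t => rfl
  refine ⟨fun t => g (X t), fun t => hgU _, ?_⟩
  have htraj : ∀ t, traj f x0 (fun t => g (X t)) t = X t := by
    intro t
    induction t with
    | zero => rfl
    | succ t ih => simp [traj, ih, hXsucc]
  rintro ⟨t, htXU, htD⟩
  have hpos : ∀ t, (∀ s < t, X s ∈ D) → 0 < B (X t) := by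
    intro t
    induction t with
    | zero => intro _; exact h3 x0 hx0
    | succ t ih =>
      intro h
      have hXtD : X t ∈ D := h t (Nat.lt_succ_self t)
      have hBt : 0 < B (X t) := ih fun s hs => h s (hs.trans (Nat.lt_succ_self t))
      have := hgB (X t) hXtD
      rw [hXsucc]
      exact lt_of_lt_of_le (mul_pos hlam0 hBt) this
  have hBpos : 0 < B (X t) := hpos t (fun s hs => by rw [← htraj]; exact htD s hs)
  rw [htraj] at htXU
  exact absurd (h2 _ htXU) (not_le.mpr hBpos)
end
end
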